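/- For the random walk on the network (G, c) and every vertex u, the probability that two independent random walks started at u collide at only finitely many times satisfies q_fin(u) = Σ_v Σ_{n≥0} p_n(u, v)^2 · q_0(v), where the outer sum is over all vertices v. -/

import Mathlib

open MeasureTheory
open scoped ENNReal NNReal Classical

namespace CollisionsStmt

variable {V : Type*}

/-- The total conductance `c(u) = Σ_v c(u,v)` at a vertex `u` of the network. -/
noncomputable def cWeight (c : V → V → ℝ≥0) (u : V) : ℝ≥0∞ := ∑' v, (c u v : ℝ≥0∞)

/-- One-step transition probabilities of the random walk on the network `(G, c)`:
`p(u,v) = c(u,v)/c(u)`. -/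
noncomputable def netStep (c : V → V → ℝ≥0) (u v : V) : ℝ≥0∞ :=
  (c u v : ℝ≥0∞) / cWeight c u

/-- The `n`-step transition probabilities of the random walk on the network `(G, c)`. -/
noncomputable def netPn (c : V → V → ℝ≥0) : ℕ → V → V → ℝ≥0∞
  | 0, u, v => if u = v then 1 else 0
  | n + 1, u, v => ∑' w, netStep c u w * netPn c n w v

/-- The graph underlying the network: an edge between `u` and `v` whenever `c(u,v) > 0`. -/
def netGraph (c : V → V → ℝ≥0) : SimpleGraph V :=
  SimpleGraph.fromRel (fun u v => c u v ≠ 0)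

/-- `μ` is the law (on path space, via the Ionescu–Tulcea trajectory construction) of
two independent walks with one-step transition probabilities `p`, started at `a` and `b`
respectively; equivalently, the Markov chain on `V × V` with kernel `p ⊗ p` started at `(a, b)`.
The law is characterized by being a probability measure with the prescribed
finite-dimensional (cylinder) distributions. -/
def IsPairWalkMeasure [MeasurableSpace V] (p : V → V → ℝ≥0∞) (a b : V)
    (μ : Measure (ℕ → V × V)) : Prop :=
  IsProbabilityMeasure μ ∧
    ∀ (n : ℕ) (x : ℕ → V × V),
      μ {ω | ∀ i ≤ n, ω i = x i} =
        (if x 0 = (a, b) then (1 : ℝ≥0∞) else 0) *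
          ∏ i ∈ Finset.range n, (p (x i).1 (x (i + 1)).1 * p (x i).2 (x (i + 1)).2)

/-- The event that the two walks do not collide at any time `n ≥ 1`. -/
def noCollision : Set (ℕ → V × V) := {ω | ∀ n ≥ 1, (ω n).1 ≠ (ω n).2}

/-- The event that the two walks have their last collision at the vertex `v`: for some
`n ≥ 0`, `X_n = Y_n = v` and `X_m ≠ Y_m` for all `m > n`. -/
def lastCollisionAt (v : V) : Set (ℕ → V × V) :=
  {ω | ∃ n : ℕ, ω n = (v, v) ∧ ∀ m > n, (ω m).1 ≠ (ω m).2}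

/-- The event that the two walks collide at only finitely many times. -/
def finCollisions : Set (ℕ → V × V) := {ω | {n : ℕ | (ω n).1 = (ω n).2}.Finite}

/-- The event that the two walks collide at infinitely many times. -/
def infCollisions : Set (ℕ → V × V) := {ω | {n : ℕ | (ω n).1 = (ω n).2}.Infinite}

/-! Split the event of finitely many collisions according to the place `v` and time `n` of the
last collision. By the Markov property at time `n`, the pair reaches `(v, v)` at time `n` with
probability `p_n(u, v)^2` and from there never collides again with probability `q_0(v)`.
For events depending on finitely many coordinates the Markov property is an identity between
sums of cylinder probabilities over finite paths; it passes to the event of no further collision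
by continuity from above. -/

section MarkovChain

variable {α : Type*}

/-- A finite path `y 0, …, y N`, continued constantly by its last point. -/
def extendPath {N : ℕ} (y : Fin (N + 1) → α) (i : ℕ) : α := y ⟨min i N, by omega⟩

lemma extendPath_of_le {N : ℕ} (y : Fin (N + 1) → α) {i : ℕ} (hi : i ≤ N) :
    extendPath y i = y ⟨i, by omega⟩ := by
  simp [extendPath, min_eq_left hi]

def consSeq (a : α) (ω : ℕ → α) : ℕ → α
  | 0 => a
  | i + 1 => ω i

lemma extendPath_cons {N : ℕ} (a : α) (y : Fin (N + 1) → α) :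
    extendPath (Fin.cons a y : Fin (N + 2) → α) = consSeq a (extendPath y) := by
  funext i
  cases i with
  | zero => simp [extendPath, consSeq]
  | succ i =>
    simp only [extendPath, consSeq, Nat.succ_min_succ]
    exact Fin.cons_succ (α := fun _ => α) a y ⟨min i N, by omega⟩

noncomputable def chainWeight (P : α → α → ℝ≥0∞) (a : α) (N : ℕ) (x : ℕ → α) : ℝ≥0∞ :=
  (if x 0 = a then 1 else 0) * ∏ i ∈ Finset.range N, P (x i) (x (i + 1))

lemma chainWeight_of_ne (P : α → α → ℝ≥0∞) {a : α} (N : ℕ) {x : ℕ → α} (hx : x 0 ≠ a) :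
    chainWeight P a N x = 0 := by
  simp [chainWeight, hx]

lemma chainWeight_consSeq (P : α → α → ℝ≥0∞) (a b : α) (N : ℕ) (x : ℕ → α) :
    chainWeight P a (N + 1) (consSeq b x) =
      if b = a then P b (x 0) * chainWeight P (x 0) N x else 0 := by
  simp only [chainWeight, Finset.prod_range_succ', consSeq, if_true, one_mul]
  by_cases hba : b = a <;> simp [hba, mul_comm]

/-- The probability that the chain started at `a` follows, up to time `N`, a path satisfying
`F`. -/
noncomputable def pathProb (P : α → α → ℝ≥0∞) (a : α) (N : ℕ) (F : (ℕ → α) → Prop) : ℝ≥0∞ :=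
  ∑' y : Fin (N + 1) → α, if F (extendPath y) then chainWeight P a N (extendPath y) else 0

lemma pathProb_succ (P : α → α → ℝ≥0∞) (a : α) (N : ℕ) (F : (ℕ → α) → Prop) :
    pathProb P a (N + 1) F = ∑' w, P a w * pathProb P w N (F ∘ consSeq a) := by
  calc pathProb P a (N + 1) F
      = ∑' (b : α) (y : Fin (N + 1) → α), if F (consSeq b (extendPath y)) then
          chainWeight P a (N + 1) (consSeq b (extendPath y)) else 0 := by
        rw [pathProb, ← (Fin.consEquiv fun _ => α).tsum_eq, ENNReal.tsum_prod']
        simp only [Fin.consEquiv, Equiv.coe_fn_mk, extendPath_cons]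
    _ = ∑' y : Fin (N + 1) → α, if F (consSeq a (extendPath y)) then
          P a (extendPath y 0) * chainWeight P (extendPath y 0) N (extendPath y) else 0 := by
        rw [tsum_eq_single a fun b hb => by simp [chainWeight_consSeq, hb]]
        simp [chainWeight_consSeq]
    _ = ∑' w, P a w * pathProb P w N (F ∘ consSeq a) := by
        simp only [pathProb, ← ENNReal.tsum_mul_left]
        rw [ENNReal.tsum_comm]
        refine tsum_congr fun y => ?_
        rw [tsum_eq_single (extendPath y 0) fun w hw => by simp [chainWeight_of_ne P N hw.symm]]
        simp

noncomputable def kernelPow (P : α → α → ℝ≥0∞) : ℕ → α → α → ℝ≥0∞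
  | 0, a, b => if a = b then 1 else 0
  | n + 1, a, b => ∑' w, P a w * kernelPow P n w b

lemma pathProb_apply_eq_and_shift (P : α → α → ℝ≥0∞) (a b : α) (n N : ℕ)
    (F : (ℕ → α) → Prop) :
    pathProb P a (n + N) (fun ω => ω n = b ∧ F (fun i => ω (i + n))) =
      kernelPow P n a b * pathProb P b N F := by
  induction n generalizing a with
  | zero =>
    rw [Nat.zero_add]
    by_cases hab : a = b
    · subst hab
      simp only [add_zero, kernelPow, if_true, one_mul, pathProb]
      refine tsum_congr fun y => ?_
      by_cases hy : extendPath y 0 = a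
      · simp [hy]
      · simp [chainWeight_of_ne P N hy]
    · simp only [add_zero, kernelPow, hab, if_false, zero_mul, pathProb]
      refine ENNReal.tsum_eq_zero.2 fun y => ?_
      by_cases hy : extendPath y 0 = b
      · simp [chainWeight_of_ne P N (hy.trans_ne (Ne.symm hab))]
      · simp [hy]
  | succ n ih =>
    rw [Nat.add_right_comm, pathProb_succ]
    simp only [kernelPow, ← ENNReal.tsum_mul_right, mul_assoc, ← ih]
    rfl

lemma dependsOn_apply_eq_and_shift {n N : ℕ} (b : α) {F : (ℕ → α) → Prop}
    (hF : DependsOn F (Set.Iic N)) :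
    DependsOn (fun ω : ℕ → α => ω n = b ∧ F (fun i => ω (i + n))) (Set.Iic (n + N)) := by
  intro ω ω' h
  have hshift : F (fun i => ω (i + n)) = F (fun i => ω' (i + n)) :=
    hF fun i hi => h (i + n) (by simp only [Set.mem_Iic] at hi ⊢; omega)
  simp only [h n (by simp), hshift]

def initialSegment (N : ℕ) (ω : ℕ → α) : Fin (N + 1) → α := fun j => ω j

lemma setOf_eq_preimage_of_dependsOn {N : ℕ} {F : (ℕ → α) → Prop}
    (hF : DependsOn F (Set.Iic N)) :
    {ω | F ω} = initialSegment N ⁻¹' {y | F (extendPath y)} := by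
  ext ω
  exact (hF fun i hi => (extendPath_of_le (initialSegment N ω) (Set.mem_Iic.1 hi)).symm).to_iff

lemma preimage_singleton_eq_cylinder {N : ℕ} (y : Fin (N + 1) → α) :
    initialSegment N ⁻¹' {y} = {ω | ∀ i ≤ N, ω i = extendPath y i} := by
  ext ω
  simp only [Set.mem_preimage, Set.mem_singleton_iff, funext_iff, initialSegment]
  constructor
  · intro h i hi
    rw [extendPath_of_le y hi]
    exact h ⟨i, by omega⟩
  · intro h j
    rw [h j (by omega), extendPath_of_le y (by omega)]

variable [MeasurableSpace α]

lemma measurable_initialSegment (N : ℕ) : Measurable (initialSegment (α := α) N) :=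
  measurable_pi_lambda _ fun _ => measurable_pi_apply _

variable [MeasurableSingletonClass α] {P : α → α → ℝ≥0∞} {a b : α} {μa μb : Measure (ℕ → α)}

lemma ae_apply_zero_eq [IsProbabilityMeasure μa]
    (hμa : ∀ N x, μa {ω | ∀ i ≤ N, ω i = x i} = chainWeight P a N x) : ∀ᵐ ω ∂μa, ω 0 = a := by
  have h := hμa 0 fun _ => a
  simp only [nonpos_iff_eq_zero, forall_eq, chainWeight, if_true, Finset.range_zero,
    Finset.prod_empty, mul_one] at h
  have hmeas : MeasurableSet {ω : ℕ → α | ω 0 = a} :=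
    (measurableSet_singleton a).preimage (measurable_pi_apply 0)
  rw [ae_iff_measure_eq hmeas.nullMeasurableSet, h, measure_univ]

variable [Countable α]

lemma measurableSet_of_dependsOn {N : ℕ} {F : (ℕ → α) → Prop}
    (hF : DependsOn F (Set.Iic N)) : MeasurableSet {ω | F ω} := by
  rw [setOf_eq_preimage_of_dependsOn hF]
  exact measurable_initialSegment N (Set.to_countable _).measurableSet

lemma measure_eq_pathProb
    (hμa : ∀ N x, μa {ω | ∀ i ≤ N, ω i = x i} = chainWeight P a N x)
    {N : ℕ} {F : (ℕ → α) → Prop} (hF : DependsOn F (Set.Iic N)) :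
    μa {ω | F ω} = pathProb P a N F := by
  have hfiber (y : Fin (N + 1) → α) :
      MeasurableSet (initialSegment N ⁻¹' {y}) :=
    measurable_initialSegment N (measurableSet_singleton y)
  rw [setOf_eq_preimage_of_dependsOn hF,
    ← tsum_measure_preimage_singleton (Set.to_countable _) fun y _ => hfiber y,
    tsum_subtype {y | F (extendPath y)} fun y => μa (initialSegment N ⁻¹' {y})]
  refine tsum_congr fun y => ?_
  simp only [Set.indicator_apply, Set.mem_ofPred_eq, preimage_singleton_eq_cylinder, hμa]

lemma measure_apply_eq_and_shift
    (hμa : ∀ N x, μa {ω | ∀ i ≤ N, ω i = x i} = chainWeight P a N x)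
    (hμb : ∀ N x, μb {ω | ∀ i ≤ N, ω i = x i} = chainWeight P b N x)
    (n : ℕ) {N : ℕ} {F : (ℕ → α) → Prop} (hF : DependsOn F (Set.Iic N)) :
    μa {ω | ω n = b ∧ F (fun i => ω (i + n))} = kernelPow P n a b * μb {ω | F ω} := by
  rw [measure_eq_pathProb hμa (dependsOn_apply_eq_and_shift b hF), measure_eq_pathProb hμb hF,
    pathProb_apply_eq_and_shift]

lemma measure_apply_eq_and_shift_of_antitone [IsProbabilityMeasure μa] [IsProbabilityMeasure μb]
    (hμa : ∀ N x, μa {ω | ∀ i ≤ N, ω i = x i} = chainWeight P a N x)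
    (hμb : ∀ N x, μb {ω | ∀ i ≤ N, ω i = x i} = chainWeight P b N x)
    (n : ℕ) {F : ℕ → (ℕ → α) → Prop} (hF : ∀ N, DependsOn (F N) (Set.Iic N))
    (hanti : Antitone F) :
    μa {ω | ω n = b ∧ ∀ N, F N (fun i => ω (i + n))} = kernelPow P n a b * μb {ω | ∀ N, F N ω} := by
  have hK : kernelPow P n a b ≠ ∞ := by
    have h := measure_apply_eq_and_shift hμa hμb n (N := 0) (F := fun _ => True) fun _ _ _ => rfl
    simp only [and_true, Set.ofPred_true, measure_univ, mul_one] at h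
    exact h ▸ measure_ne_top _ _
  have hB := tendsto_measure_iInter_atTop (μ := μa)
    (s := fun N => {ω | ω n = b ∧ F N (fun i => ω (i + n))})
    (fun N =>
      (measurableSet_of_dependsOn (dependsOn_apply_eq_and_shift b (hF N))).nullMeasurableSet)
    (fun N M h ω hω => ⟨hω.1, hanti h _ hω.2⟩) ⟨0, measure_ne_top _ _⟩
  have hC := tendsto_measure_iInter_atTop (μ := μb) (s := fun N => {ω | F N ω})
    (fun N => (measurableSet_of_dependsOn (hF N)).nullMeasurableSet)
    (fun N M h ω hω => hanti h _ hω) ⟨0, measure_ne_top _ _⟩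
  simp only [Function.comp_def, measure_apply_eq_and_shift hμa hμb n (hF _)] at hB
  have hBset : {ω : ℕ → α | ω n = b ∧ ∀ N, F N (fun i => ω (i + n))} =
      ⋂ N, {ω | ω n = b ∧ F N (fun i => ω (i + n))} := by
    ext ω
    simp [forall_and]
  rw [hBset, Set.ofPred_forall]
  exact tendsto_nhds_unique hB (ENNReal.Tendsto.const_mul hC (Or.inr hK))

end MarkovChain

section Collisions

noncomputable def pairKernel (p : V → V → ℝ≥0∞) (s t : V × V) : ℝ≥0∞ := p s.1 t.1 * p s.2 t.2

lemma kernelPow_pairKernel (p : V → V → ℝ≥0∞) (n : ℕ) (s t : V × V) :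
    kernelPow (pairKernel p) n s t = kernelPow p n s.1 t.1 * kernelPow p n s.2 t.2 := by
  induction n generalizing s with
  | zero =>
    by_cases h₁ : s.1 = t.1 <;> by_cases h₂ : s.2 = t.2 <;> simp [kernelPow, Prod.ext_iff, h₁, h₂]
  | succ n ih =>
    simp only [kernelPow, ih, pairKernel, ENNReal.tsum_prod']
    rw [← ENNReal.tsum_mul_right]
    refine tsum_congr fun w₁ => ?_
    rw [← ENNReal.tsum_mul_left]
    exact tsum_congr fun w₂ => by ring

lemma netPn_eq_kernelPow (c : V → V → ℝ≥0) : netPn c = kernelPow (netStep c) := by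
  funext n
  induction n with
  | zero => rfl
  | succ n ih =>
    funext u v
    simp only [netPn, kernelPow, ih]

lemma IsPairWalkMeasure.cylinder [MeasurableSpace V] {p : V → V → ℝ≥0∞} {a b : V}
    {μ : Measure (ℕ → V × V)} (h : IsPairWalkMeasure p a b μ) (N : ℕ) (x : ℕ → V × V) :
    μ {ω | ∀ i ≤ N, ω i = x i} = chainWeight (pairKernel p) (a, b) N x := by
  rw [h.2 N x, chainWeight]
  congr

def noCollisionUpTo (N : ℕ) (ω : ℕ → V × V) : Prop := ∀ m, 1 ≤ m → m ≤ N → (ω m).1 ≠ (ω m).2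

lemma dependsOn_noCollisionUpTo (N : ℕ) : DependsOn (noCollisionUpTo (V := V) N) (Set.Iic N) := by
  intro ω ω' h
  simp only [noCollisionUpTo]
  exact propext <| forall₃_congr fun m _ hm => by rw [h m hm]

lemma antitone_noCollisionUpTo : Antitone (noCollisionUpTo (V := V)) :=
  fun _ _ hNM _ hω m hm₁ hm₂ => hω m hm₁ (hm₂.trans hNM)

lemma noCollision_eq_setOf_forall_noCollisionUpTo :
    (noCollision : Set (ℕ → V × V)) = {ω | ∀ N, noCollisionUpTo N ω} := by
  ext ω
  exact ⟨fun h _ m hm _ => h m hm, fun h m hm => h m m hm le_rfl⟩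

def lastCollisionAtTime (v : V) (n : ℕ) : Set (ℕ → V × V) :=
  {ω | ω n = (v, v) ∧ (fun i => ω (i + n)) ∈ noCollision}

lemma le_of_mem_lastCollisionAtTime {v : V} {n m : ℕ} {ω : ℕ → V × V}
    (hω : ω ∈ lastCollisionAtTime v n) (hm : (ω m).1 = (ω m).2) : m ≤ n := by
  by_contra! hnm
  exact hω.2 (m - n) (by omega) (by simpa [Nat.sub_add_cancel hnm.le] using hm)

lemma pairwise_disjoint_lastCollisionAtTime :
    Pairwise (Function.onFun Disjoint fun q : V × ℕ => lastCollisionAtTime q.1 q.2) := by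
  rintro ⟨v, n⟩ ⟨v', n'⟩ hne
  refine Set.disjoint_left.2 fun ω hω hω' => hne ?_
  have hcoll {w : V} {k : ℕ} (h : ω k = (w, w)) : (ω k).1 = (ω k).2 := by rw [h]
  have hnn' : n = n' := le_antisymm (le_of_mem_lastCollisionAtTime hω' (hcoll hω.1))
    (le_of_mem_lastCollisionAtTime hω (hcoll hω'.1))
  subst hnn'
  obtain rfl : v = v' := (Prod.ext_iff.1 (hω.1.symm.trans hω'.1)).1
  rfl

lemma iUnion_lastCollisionAtTime :
    ⋃ q : V × ℕ, lastCollisionAtTime q.1 q.2 =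
      finCollisions ∩ {ω | ∃ n, (ω n).1 = (ω n).2} := by
  ext ω
  simp only [Set.mem_iUnion, Set.mem_inter_iff, Prod.exists]
  constructor
  · rintro ⟨v, n, hω⟩
    exact ⟨(Set.finite_Iic n).subset fun m hm => le_of_mem_lastCollisionAtTime hω hm,
      n, by rw [hω.1]⟩
  · rintro ⟨hfin, n₀, hn₀⟩
    obtain ⟨n, hn, hmax⟩ := Set.exists_max_image _ id hfin ⟨n₀, hn₀⟩
    refine ⟨(ω n).1, n, Prod.ext rfl hn.symm, fun m hm hcoll => ?_⟩
    have := hmax (m + n) hcoll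
    simp only [id] at this
    omega

variable [Countable V] [MeasurableSpace V] [MeasurableSingletonClass V]

lemma measurableSet_lastCollisionAtTime (v : V) (n : ℕ) :
    MeasurableSet (lastCollisionAtTime v n) := by
  have hnoCollision : MeasurableSet (noCollision : Set (ℕ → V × V)) := by
    rw [noCollision_eq_setOf_forall_noCollisionUpTo, Set.ofPred_forall]
    exact .iInter fun N => measurableSet_of_dependsOn (dependsOn_noCollisionUpTo N)
  exact ((measurableSet_singleton _).preimage (measurable_pi_apply n)).inter
    (hnoCollision.preimage (measurable_pi_lambda _ fun i => measurable_pi_apply (i + n)))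

lemma measure_lastCollisionAtTime {p : V → V → ℝ≥0∞} {u v : V} {μu μv : Measure (ℕ → V × V)}
    (hu : IsPairWalkMeasure p u u μu) (hv : IsPairWalkMeasure p v v μv) (n : ℕ) :
    μu (lastCollisionAtTime v n) = kernelPow p n u v ^ 2 * μv noCollision := by
  have := hu.1
  have := hv.1
  rw [lastCollisionAtTime, noCollision_eq_setOf_forall_noCollisionUpTo]
  simp only [Set.mem_ofPred_eq]
  rw [measure_apply_eq_and_shift_of_antitone hu.cylinder hv.cylinder n dependsOn_noCollisionUpTo
    antitone_noCollisionUpTo, kernelPow_pairKernel, pow_two]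

end Collisions

theorem network_finitely_many_collisions_decomposition_general
    [Countable V] [MeasurableSpace V] [DiscreteMeasurableSpace V]
    (c : V → V → ℝ≥0)
    (μ : V → Measure (ℕ → V × V))
    (hμ : ∀ w : V, IsPairWalkMeasure (netStep c) w w (μ w))
    (u : V) :
    μ u finCollisions = ∑' v : V, ∑' n : ℕ, (netPn c n u v) ^ 2 * μ v noCollision := by
  have := (hμ u).1
  have hcoll : ∀ᵐ ω ∂μ u, ∃ n, (ω n).1 = (ω n).2 :=
    (ae_apply_zero_eq (hμ u).cylinder).mono fun ω h => ⟨0, by rw [h]⟩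
  calc μ u finCollisions
      = μ u (⋃ q : V × ℕ, lastCollisionAtTime q.1 q.2) := by
        rw [iUnion_lastCollisionAtTime]
        exact (measure_inter_conull (ae_iff.1 hcoll)).symm
    _ = ∑' (v : V) (n : ℕ), μ u (lastCollisionAtTime v n) := by
        rw [measure_iUnion pairwise_disjoint_lastCollisionAtTime
          fun q => measurableSet_lastCollisionAtTime q.1 q.2, ENNReal.tsum_prod']
    _ = ∑' v : V, ∑' n : ℕ, (netPn c n u v) ^ 2 * μ v noCollision := by
        simp only [measure_lastCollisionAtTime (hμ u) (hμ _), netPn_eq_kernelPow]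

/-- for the network random walk,
`q_fin(u) = Σ_v Σ_{n ≥ 0} p_n(u, v)^2 · q_0(v)`. -/
theorem network_finitely_many_collisions_decomposition
    [Countable V] [MeasurableSpace V] [DiscreteMeasurableSpace V]
    (c : V → V → ℝ≥0)
    (hsymm : ∀ u v : V, c u v = c v u)
    (hloc : ∀ u : V, {v : V | c u v ≠ 0}.Finite)
    (hconn : (netGraph c).Connected)
    (hpos : ∀ u : V, 0 < cWeight c u)
    (μ : V → Measure (ℕ → V × V))
    (hμ : ∀ w : V, IsPairWalkMeasure (netStep c) w w (μ w))
    (u : V) :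
    μ u finCollisions = ∑' v : V, ∑' n : ℕ, (netPn c n u v) ^ 2 * μ v noCollision :=
  network_finitely_many_collisions_decomposition_general c μ hμ u
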